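/- In the NFA for the status field of a non-root-level QNode, every directed cycle contains at least one 'begin new acquisition' edge. -/

import Mathlib

/-- States of the NFA for the status field of a non-root-level QNode. -/
inductive S : Type
  | R1 | R2 | R3 | W1 | W2 | W3 | W4 | W5
  | C1 | P1 | P2 | P3 | VP1 | V1 | A1
deriving DecidableEq

/-- Edges of the non-root-level status NFA; the Boolean flag marks
'begin acquisition' edges. -/
inductive E : S → S → Bool → Prop
  | a1 : E .R1 .W1 true
  | a2 : E .R1 .W2 true
  | a3 : E .A1 .W1 true
  | a4 : E .P2 .W5 true
  | a5 : E .VP1 .W3 true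
  | a6 : E .C1 .W4 true
  | e1 : E .W2 .C1 false
  | e2 : E .C1 .R1 false
  | e3 : E .C1 .P2 false
  | e4 : E .P2 .R1 false
  | e5 : E .W5 .P2 false
  | e6 : E .W5 .R3 false
  | e7 : E .W5 .R2 false
  | e8 : E .R3 .C1 false
  | e9 : E .W4 .C1 false
  | e10 : E .W1 .A1 false
  | e11 : E .A1 .VP1 false
  | e12 : E .VP1 .R1 false
  | e13 : E .VP1 .P2 false
  | e14 : E .W1 .V1 false
  | e15 : E .V1 .R1 false
  | e16 : E .V1 .P2 false
  | e17 : E .W1 .P1 false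
  | e18 : E .P1 .C1 false
  | e19 : E .W3 .P2 false
  | e20 : E .W3 .P3 false
  | e21 : E .P3 .P2 false
  | e22 : E .P3 .R3 false
  | e23 : E .P3 .R2 false
  | e24 : E .W3 .R3 false
  | e25 : E .W3 .R2 false
  | e26 : E .R2 .V1 false
  | e27 : E .R2 .P1 false
  | e28 : E .R2 .A1 false

theorem Relation.not_transGen_self_of_rel_imp_lt {α β : Type*} [Preorder β]
    {r : α → α → Prop} (f : α → β) (hf : ∀ ⦃a b⦄, r a b → f b < f a) (a : α) :
    ¬ Relation.TransGen r a a := fun h => by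
  have hlt : Relation.TransGen (· > ·) (f a) (f a) := h.lift f hf
  rw [Relation.transGen_eq_self] at hlt
  exact lt_irrefl _ hlt

/-- The length of the longest path of non-acquisition edges starting at the state. -/
def height : S → ℕ
  | .R1 => 0
  | .P2 => 1
  | .C1 | .VP1 | .V1 => 2
  | .R3 | .W2 | .W4 | .A1 | .P1 => 3
  | .R2 | .W1 => 4
  | .W5 | .P3 => 5
  | .W3 => 6

theorem height_lt_of_E {a b : S} (h : E a b false) : height b < height a := by
  cases h <;> decide

/-- Every directed cycle of the non-root-level status NFA contains at least
one 'begin acquisition' edge. -/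
theorem nonroot_status_livelock_free :
    ∀ s : S, ¬ Relation.TransGen (fun a b => E a b false) s s :=
  Relation.not_transGen_self_of_rel_imp_lt height fun _ _ => height_lt_of_E
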